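/- For every edge {a,b} ⊆ {1,…,7} (a ≠ b), the edge vector e_{ab} ∈ F^{21} is nonzero; more precisely, for a 5-element subset u ⊆ {1,…,7} one has e_{ab}(u) ≠ 0 if and only if both a ∈ u and b ∈ u. Consequently, for every edge of ∂Δ⁶ there exists a nonzero permitted coloring of ∂Δ⁶ (namely e_{ab}) whose support consists exactly of the pentachora containing that edge, where x ∈ F^{21} is called a permitted coloring of ∂Δ⁶ if for every p ∈ {1,…,7}, writing {1,…,7}\{p} = {q₁ < q₂ < q₃ < q₄ < q₅ < q₆}, one has (x(u_{q₁}^p), x(u_{q₂}^p), x(u_{q₃}^p)) · A^{(p)}[(q₁,q₂,q₃)→(q₄,q₅,q₆)] = (x(u_{q₄}^p), x(u_{q₅}^p), x(u_{q₆}^p)). -/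

import Mathlib

/-- The determinant `d_{ijk}` built from the columns `(α_i,β_i,γ_i)`, `(α_j,β_j,γ_j)`,
`(α_k,β_k,γ_k)`. -/
noncomputable def dd {F : Type*} [Field F] (al be ga : Fin 7 → F) (i j k : Fin 7) : F :=
  Matrix.det !![al i, al j, al k; be i, be j, be k; ga i, ga j, ga k]

/-- The ansatz matrix `A^{(p)}[(i₁,i₂,i₃)→(o₁,o₂,o₃)]`. -/
noncomputable def ansatz {F : Type*} [Field F] (al be ga : Fin 7 → F) (p : Fin 7)
    (inp out : Fin 3 → Fin 7) : Matrix (Fin 3) (Fin 3) F := fun a b =>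
  dd al be ga (inp (a + 1)) (out b) p * dd al be ga (inp (a + 2)) (out b) p /
    (dd al be ga (inp a) (inp (a + 1)) p * dd al be ga (inp a) (inp (a + 2)) p)

/-- The 5-element subsets of `{1,…,7}` (pentachora of `∂Δ⁶`). -/
def Pent : Type := {u : Finset (Fin 7) // u.card = 5}

/-- The edge vector `e_{ab}` evaluated at a subset `u ⊆ {1,…,7}`. -/
noncomputable def eVec {F : Type*} [Field F] (al be ga : Fin 7 → F) (a b : Fin 7)
    (u : Finset (Fin 7)) : F :=
  if a ∈ u ∧ b ∈ u then
    dd al be ga a ((uᶜ.sort (· ≤ ·)).getD 0 a) ((uᶜ.sort (· ≤ ·)).getD 1 a) *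
      dd al be ga b ((uᶜ.sort (· ≤ ·)).getD 0 a) ((uᶜ.sort (· ≤ ·)).getD 1 a)
  else 0

/-- `qs p` enumerates `{1,…,7} \ {p}` in increasing order: `q₁ < q₂ < ⋯ < q₆`. -/
def qs (p : Fin 7) (n : Fin 6) : Fin 7 :=
  if (n : ℕ) < (p : ℕ) then ⟨(n : ℕ), by have := n.isLt; omega⟩
  else ⟨(n : ℕ) + 1, by have := n.isLt; omega⟩

lemma qs_ne (p : Fin 7) (n : Fin 6) : qs p n ≠ p := by
  unfold qs
  split <;> (intro h; have := congrArg Fin.val h; simp at this; omega)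

/-- `u_q^p := {1,…,7} \ {p,q}` as a pentachoron. -/
def uPent (p q : Fin 7) (h : q ≠ p) : Pent :=
  ⟨({p, q} : Finset (Fin 7))ᶜ, by
    rw [Finset.card_compl, Finset.card_pair (Ne.symm h)]
    decide⟩

/-- `x : Pent → F` is a permitted coloring of `∂Δ⁶` if for every `p`, writing
`{1,…,7} \ {p} = {q₁ < ⋯ < q₆}`, the row `(x(u_{q₁}^p), x(u_{q₂}^p), x(u_{q₃}^p))` is
carried by `A^{(p)}[(q₁,q₂,q₃)→(q₄,q₅,q₆)]` to `(x(u_{q₄}^p), x(u_{q₅}^p), x(u_{q₆}^p))`. -/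
noncomputable def Permitted {F : Type*} [Field F] (al be ga : Fin 7 → F)
    (x : Pent → F) : Prop :=
  ∀ p : Fin 7,
    Matrix.vecMul
        (fun n : Fin 3 => x (uPent p (qs p ⟨(n : ℕ), by have := n.isLt; omega⟩)
          (qs_ne p _)))
        (ansatz al be ga p
          (fun n : Fin 3 => qs p ⟨(n : ℕ), by have := n.isLt; omega⟩)
          (fun n : Fin 3 => qs p ⟨(n : ℕ) + 3, by have := n.isLt; omega⟩)) =
      fun n : Fin 3 => x (uPent p (qs p ⟨(n : ℕ) + 3, by have := n.isLt; omega⟩)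
        (qs_ne p _))

/-!
Fix `p` and write `[x y] := d_{x y p}`; these brackets are antisymmetric and satisfy the
three-term Plücker relation, exactly like `2 × 2` determinants of points on the projective
line obtained by projecting from the `p`-th point. On `u_q^p` the edge vector takes the value
`[a q][b q]`, a binary quadratic form in `q`. A binary quadratic form is determined by its
values at three distinct points through Lagrange interpolation, and the `(k, n)` entry of the
ansatz matrix is precisely the `k`-th Lagrange weight for the inputs evaluated at the `n`-th
output. So the edge vector is permitted, and genericity makes it nonzero on every pentachoron
containing `a` and `b`.
-/

theorem bracket_mul_bracket_eq_lagrange_sum {ι F : Type*} [Field F] (br : ι → ι → F)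
    (hanti : ∀ x y, br x y = -br y x)
    (hpl : ∀ x y z w, br x y * br z w - br x z * br y w + br x w * br y z = 0)
    (a b o : ι) (i : Fin 3 → ι) (hi : ∀ j k, j ≠ k → br (i j) (i k) ≠ 0) :
    ∑ k, br a (i k) * br b (i k) *
        (br (i (k + 1)) o * br (i (k + 2)) o / (br (i k) (i (k + 1)) * br (i k) (i (k + 2)))) =
      br a o * br b o := by
  have h12 := hi 0 1 (by decide)
  have h13 := hi 0 2 (by decide)
  have h23 := hi 1 2 (by decide)
  simp only [Fin.sum_univ_three, Fin.isValue, Fin.reduceAdd]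
  rw [hanti (i 1) (i 0), hanti (i 2) (i 0), hanti (i 2) (i 1)]
  field_simp
  linear_combination
    (br b (i 2) * br (i 1) o * br (i 0) o) * hpl a (i 0) (i 1) (i 2)
    + (br a (i 1) * br (i 2) o * br (i 0) o) * hpl b (i 0) (i 1) (i 2)
    - (br a (i 1) * br b (i 2) * br (i 0) o) * hpl (i 0) (i 1) (i 2) o
    - (br b o * br (i 0) (i 2) * br (i 1) (i 2)) * hpl a (i 0) (i 1) o
    - ((br a (i 1) * br (i 0) o - br a (i 0) * br (i 1) o) * br (i 1) (i 2)) *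
        hpl b (i 0) (i 2) o

section

variable {F : Type*} [Field F] (al be ga : Fin 7 → F)

theorem dd_eq (x y z : Fin 7) :
    dd al be ga x y z = al x * (be y * ga z - be z * ga y) - al y * (be x * ga z - be z * ga x) +
      al z * (be x * ga y - be y * ga x) := by
  simp only [dd, Matrix.det_fin_three, Fin.isValue, Matrix.of_apply, Matrix.cons_val',
    Matrix.cons_val_zero, Matrix.cons_val_fin_one, Matrix.cons_val_one, Matrix.cons_val]
  ring

theorem dd_swap_left (x y z : Fin 7) : dd al be ga x y z = -dd al be ga y x z := by
  simp only [dd_eq]; ring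

theorem dd_self_left (x y : Fin 7) : dd al be ga x x y = 0 := by
  simp only [dd_eq]; ring

theorem dd_self_right (x y : Fin 7) : dd al be ga x y x = 0 := by
  simp only [dd_eq]; ring

theorem dd_mul_dd_swap (x y s t : Fin 7) :
    dd al be ga x s t * dd al be ga y s t = dd al be ga x t s * dd al be ga y t s := by
  simp only [dd_eq]; ring

theorem dd_pluecker (p x y z w : Fin 7) :
    dd al be ga x y p * dd al be ga z w p - dd al be ga x z p * dd al be ga y w p +
      dd al be ga x w p * dd al be ga y z p = 0 := by
  simp only [dd_eq]; ring

theorem vecMul_ansatz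
    (hgen : ∀ i j k : Fin 7, i ≠ j → i ≠ k → j ≠ k → dd al be ga i j k ≠ 0)
    (p a b : Fin 7) (inp out : Fin 3 → Fin 7) (hinj : Function.Injective inp)
    (hp : ∀ k, inp k ≠ p) :
    Matrix.vecMul (fun k => dd al be ga a (inp k) p * dd al be ga b (inp k) p)
        (ansatz al be ga p inp out) =
      fun n => dd al be ga a (out n) p * dd al be ga b (out n) p := by
  funext n
  exact bracket_mul_bracket_eq_lagrange_sum (fun x y => dd al be ga x y p)
    (fun x y => dd_swap_left al be ga x y p) (dd_pluecker al be ga p) a b (out n) inp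
    (fun j k hjk => hgen _ _ _ (hinj.ne hjk) (hp j) (hp k))

theorem eVec_compl_pair (a b : Fin 7) {s t : Fin 7} (hst : s ≠ t) :
    eVec al be ga a b ({s, t}ᶜ) = dd al be ga a s t * dd al be ga b s t := by
  wlog hlt : s < t generalizing s t
  · rw [Finset.pair_comm, this hst.symm (lt_of_le_of_ne (not_lt.mp hlt) hst.symm),
      dd_mul_dd_swap]
  have hsort : ({s, t} : Finset (Fin 7)).sort (· ≤ ·) = [s, t] := by
    rw [Finset.sort_insert _ (by simpa using hlt.le) (by simpa using hst), Finset.sort_singleton]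
  unfold eVec
  rw [compl_compl, hsort]
  split_ifs with hmem
  · rfl
  · simp only [Finset.mem_compl, Finset.mem_insert, Finset.mem_singleton, not_or,
      not_and_or, not_not] at hmem
    rcases hmem with (rfl | rfl) | (rfl | rfl) <;>
      simp only [dd_self_left, dd_self_right, zero_mul, mul_zero]

theorem eVec_ne_zero_iff
    (hgen : ∀ i j k : Fin 7, i ≠ j → i ≠ k → j ≠ k → dd al be ga i j k ≠ 0)
    (a b : Fin 7) {u : Finset (Fin 7)} (hu : u.card = 5) :
    eVec al be ga a b u ≠ 0 ↔ a ∈ u ∧ b ∈ u := by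
  refine ⟨fun h => by_contra fun hmem => h (if_neg hmem), fun ⟨ha, hb⟩ => ?_⟩
  obtain ⟨s, t, hst, hu'⟩ := Finset.card_eq_two.mp (by simp [Finset.card_compl, hu] :
    uᶜ.card = 2)
  rw [← compl_compl u, hu'] at ha hb ⊢
  simp only [Finset.mem_compl, Finset.mem_insert, Finset.mem_singleton, not_or] at ha hb
  rw [eVec_compl_pair al be ga a b hst]
  exact mul_ne_zero (hgen _ _ _ ha.1 ha.2 hst) (hgen _ _ _ hb.1 hb.2 hst)

theorem eVec_uPent (a b : Fin 7) {p q : Fin 7} (h : q ≠ p) :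
    eVec al be ga a b (uPent p q h).1 = dd al be ga a q p * dd al be ga b q p :=
  (eVec_compl_pair al be ga a b h.symm).trans (dd_mul_dd_swap al be ga a b p q)

theorem qs_strictMono (p : Fin 7) : StrictMono (qs p) := by
  intro m n hmn
  simp only [qs, Fin.lt_def] at hmn ⊢
  split_ifs <;> dsimp only <;> omega

theorem permitted_eVec
    (hgen : ∀ i j k : Fin 7, i ≠ j → i ≠ k → j ≠ k → dd al be ga i j k ≠ 0) (a b : Fin 7) :
    Permitted al be ga (fun u : Pent => eVec al be ga a b u.1) := by
  intro p
  simp only [eVec_uPent]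
  refine vecMul_ansatz al be ga hgen p a b _ _ ?_ (fun k => qs_ne p _)
  intro m n hmn
  simpa [Fin.ext_iff] using (qs_strictMono p).injective hmn

theorem exists_pent_mem (a b : Fin 7) : ∃ u : Pent, a ∈ u.1 ∧ b ∈ u.1 := by
  obtain ⟨u, hab, -, hu⟩ := Finset.exists_subsuperset_card_eq (Finset.subset_univ {a, b})
    (Finset.card_le_two.trans (by decide : 2 ≤ 5)) (by simp)
  exact ⟨⟨u, hu⟩, hab (by simp), hab (by simp)⟩

end

theorem edgeVector_nonzero_support_and_permitted_general {F : Type*} [Field F]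
    (al be ga : Fin 7 → F)
    (hgen : ∀ i j k : Fin 7, i ≠ j → i ≠ k → j ≠ k → dd al be ga i j k ≠ 0)
    (a b : Fin 7) :
    (∀ u : Pent, eVec al be ga a b u.1 ≠ 0 ↔ (a ∈ u.1 ∧ b ∈ u.1)) ∧
    (fun u : Pent => eVec al be ga a b u.1) ≠ 0 ∧
    Permitted al be ga (fun u : Pent => eVec al be ga a b u.1) := by
  have hsupp (u : Pent) : eVec al be ga a b u.1 ≠ 0 ↔ a ∈ u.1 ∧ b ∈ u.1 :=
    eVec_ne_zero_iff al be ga hgen a b u.2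
  obtain ⟨u, ha, hb⟩ := exists_pent_mem a b
  exact ⟨hsupp, fun h => (hsupp u).2 ⟨ha, hb⟩ (congrFun h u), permitted_eVec al be ga hgen a b⟩

/-- For every edge `{a,b}`, the edge vector `e_{ab} ∈ F^{21}` is nonzero at a 5-element
subset `u` exactly when `a, b ∈ u`; in particular it is a nonzero permitted coloring of
`∂Δ⁶` whose support consists exactly of the pentachora containing the edge `{a,b}`. -/
theorem edgeVector_nonzero_support_and_permitted {F : Type*} [Field F]
    (al be ga : Fin 7 → F)
    (hgen : ∀ i j k : Fin 7, i ≠ j → i ≠ k → j ≠ k → dd al be ga i j k ≠ 0)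
    (a b : Fin 7) (hab : a ≠ b) :
    (∀ u : Pent, eVec al be ga a b u.1 ≠ 0 ↔ (a ∈ u.1 ∧ b ∈ u.1)) ∧
    (fun u : Pent => eVec al be ga a b u.1) ≠ 0 ∧
    Permitted al be ga (fun u : Pent => eVec al be ga a b u.1) :=
  edgeVector_nonzero_support_and_permitted_general al be ga hgen a b
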